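/- Define factor polynomials by e_n(t) = (1-t) e_{n-1}^*(t) for n \ge 1. Then for distinct positive integers n, m, the polynomials e_{n-1}^* and e_{m-1}^* are orthogonal with respect to the weight \omega(t) = 1 - t on [0,1]: \int_0^1 e_{n-1}^*(t) e_{m-1}^*(t) (1-t)\, dt = 0. -/

import Mathlib

open Polynomial MeasureTheory

/-- Falling factorial `c(c-1)⋯(c-m+1)` for real `c`. -/
noncomputable def fallFac (c : ℝ) (m : ℕ) : ℝ := ∏ i ∈ Finset.range m, (c - i)

/-- The identity-type polynomial `e_n(t) = ∑_{m=0}^n ((n)_m (-n)_m / (m!)^2) t^m`. -/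
noncomputable def idPoly (n : ℕ) : Polynomial ℝ :=
  ∑ m ∈ Finset.range (n + 1),
    Polynomial.C (fallFac (n : ℝ) m * fallFac (-(n : ℝ)) m / ((Nat.factorial m : ℝ)) ^ 2) *
      Polynomial.X ^ m

/-
The factor polynomials are controlled by the shifted Legendre polynomials `P̃ₙ`: comparing
coefficients gives `2 e_{n+1} = P̃_{n+1} + P̃_n`. By Rodrigues' formula
`n! P̃ₙ = Dⁿ (Xⁿ (1 - X)ⁿ)` and `n` integrations by parts (all boundary terms vanish), `P̃ₙ` is
orthogonal on `[0, 1]` to every polynomial of degree `< n`, hence `e_{n+1}` is orthogonal to every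
polynomial of degree `< n`. For `m < n` the weight is absorbed by `e_n = (1 - t) e*_{n-1}`, so the
integral is `∫ e_n e*_{m-1}`, and `deg e*_{m-1} < m ≤ n - 1`.
-/

open scoped Nat

namespace Nat

theorem choose_mul_choose_succ_eq (n j : ℕ) :
    n.choose j * (n + j + 1).choose (j + 1) = (n + 1).choose (j + 1) * (n + j + 1).choose j := by
  refine Nat.eq_of_mul_eq_mul_right (show 0 < j + 1 by omega) ?_
  have h := choose_succ_right_eq (n + j + 1) j
  rw [show n + j + 1 - j = n + 1 by omega] at h
  linear_combination n.choose j * h + (n + j + 1).choose j * add_one_mul_choose_eq n j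

theorem two_mul_choose_mul_choose (n k : ℕ) :
    2 * ((n + 1).choose k * (n + k).choose k) =
      (n + 1).choose k * (n + 1 + k).choose (n + 1) + n.choose k * (n + k).choose n := by
  rcases k with _ | j
  · simp
  · rw [choose_symm_add, choose_symm_add, show n + (j + 1) = n + j + 1 by omega,
      show n + 1 + (j + 1) = (n + j + 1) + 1 by omega, choose_succ_succ' (n + j + 1)]
    linear_combination
      choose_mul_choose_succ_eq n j + (n + j + 1).choose (j + 1) * choose_succ_succ' n j

end Nat

theorem eval_iterate_derivative_eq_zero_of_pow_dvd {R : Type*} [CommRing R] {p q : R[X]} {a : R}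
    {n j : ℕ} (hpq : p ^ n ∣ q) (ha : p.eval a = 0) (hj : j < n) :
    (derivative^[j] q).eval a = 0 := by
  obtain ⟨r, hr⟩ := pow_sub_dvd_iterate_derivative_of_pow_dvd j hpq
  rw [hr, eval_mul, eval_pow, ha, zero_pow (by omega), zero_mul]

theorem integral_derivative_mul_eq (f g : ℝ[X]) (a b : ℝ) :
    ∫ x in a..b, (derivative f).eval x * g.eval x =
      f.eval b * g.eval b - f.eval a * g.eval a -
        ∫ x in a..b, f.eval x * (derivative g).eval x := by
  have h := intervalIntegral.integral_deriv_mul_eq_sub (fun x _ ↦ f.hasDerivAt x)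
    (fun x _ ↦ g.hasDerivAt x) (f.derivative.continuous.intervalIntegrable a b)
    (g.derivative.continuous.intervalIntegrable a b)
  rw [intervalIntegral.integral_add (Continuous.intervalIntegrable (by fun_prop) a b)
    (Continuous.intervalIntegrable (by fun_prop) a b)] at h
  linarith

theorem integral_iterate_derivative_mul_eq (f g : ℝ[X]) (a b : ℝ) (k : ℕ)
    (hfa : ∀ j < k, (derivative^[j] f).eval a = 0) (hfb : ∀ j < k, (derivative^[j] f).eval b = 0) :
    ∫ x in a..b, (derivative^[k] f).eval x * g.eval x =
      (-1) ^ k * ∫ x in a..b, f.eval x * (derivative^[k] g).eval x := by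
  induction k generalizing g with
  | zero => simp
  | succ k ih =>
    rw [Function.iterate_succ_apply', integral_derivative_mul_eq, hfa k k.lt_succ_self,
      hfb k k.lt_succ_self, ih (derivative g) (fun j hj ↦ hfa j (by omega))
      (fun j hj ↦ hfb j (by omega)), ← Function.iterate_succ_apply]
    ring

theorem integral_shiftedLegendre_mul_eq_zero {n : ℕ} {p : ℝ[X]} (hp : p.degree < n) :
    ∫ x in (0 : ℝ)..1, ((shiftedLegendre n).map (Int.castRingHom ℝ)).eval x * p.eval x = 0 := by
  have hRodrigues : (n ! : ℝ[X]) * (shiftedLegendre n).map (Int.castRingHom ℝ) =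
      derivative^[n] (X ^ n * (1 - X) ^ n) := by
    have h := congrArg (map (Int.castRingHom ℝ)) (factorial_mul_shiftedLegendre_eq n)
    rw [Polynomial.map_mul, ← iterate_derivative_map] at h
    simpa using h
  have hIBP := integral_iterate_derivative_mul_eq (X ^ n * (1 - X) ^ n) p 0 1 n
    (fun _ hj ↦ eval_iterate_derivative_eq_zero_of_pow_dvd (dvd_mul_right _ _) eval_X hj)
    (fun _ hj ↦ eval_iterate_derivative_eq_zero_of_pow_dvd (dvd_mul_left _ _)
      (by rw [eval_sub, eval_one, eval_X, sub_self]) hj)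
  rw [iterate_derivative_eq_zero_of_degree_lt hp, ← hRodrigues] at hIBP
  simp only [eval_mul, eval_natCast, eval_zero, mul_zero, mul_assoc,
    intervalIntegral.integral_const_mul, intervalIntegral.integral_zero] at hIBP
  exact (mul_eq_zero.mp hIBP).resolve_left (by positivity)

theorem fallFac_natCast (n k : ℕ) : fallFac n k = n.descFactorial k := by
  rw [fallFac, ← descPochhammer_eval_eq_prod_range, descPochhammer_eval_eq_descFactorial]

theorem fallFac_neg_natCast (n k : ℕ) : fallFac (-n) k = (-1) ^ k * n.ascFactorial k := by
  have h := Finset.prod_neg (s := Finset.range k) fun i : ℕ ↦ (n : ℝ) + i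
  rw [Finset.card_range] at h
  rw [fallFac, Nat.ascFactorial_eq_prod_range]
  push_cast
  rw [← h]
  exact Finset.prod_congr rfl fun i _ ↦ by ring

theorem coeff_idPoly_succ (n k : ℕ) :
    (idPoly (n + 1)).coeff k = (-1) ^ k * (n + 1).choose k * (n + k).choose k := by
  simp only [idPoly, finsetSum_coeff, coeff_C_mul_X_pow, Finset.sum_ite_eq, Finset.mem_range]
  split_ifs
  · rw [fallFac_natCast, fallFac_neg_natCast, Nat.descFactorial_eq_factorial_mul_choose,
      Nat.ascFactorial_eq_factorial_mul_choose]
    field_simp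
    push_cast
    ring
  · rw [Nat.choose_eq_zero_of_lt (by omega)]
    simp

theorem two_mul_idPoly_succ (n : ℕ) :
    2 * idPoly (n + 1) =
      (shiftedLegendre (n + 1)).map (Int.castRingHom ℝ) +
        (shiftedLegendre n).map (Int.castRingHom ℝ) := by
  ext k
  rw [coeff_add, coeff_map, coeff_map, coeff_shiftedLegendre, coeff_shiftedLegendre,
    show (2 : ℝ[X]) = C 2 from rfl, coeff_C_mul, coeff_idPoly_succ]
  have := congrArg (Nat.cast (R := ℝ)) (Nat.two_mul_choose_mul_choose n k)
  simp only [eq_intCast]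
  push_cast at this ⊢
  linear_combination (-1) ^ k * this

theorem degree_idPoly_le (n : ℕ) : (idPoly n).degree ≤ n := by
  refine (degree_sum_le _ _).trans (Finset.sup_le fun i hi ↦ ?_)
  exact (degree_C_mul_X_pow_le i _).trans (by exact_mod_cast Finset.mem_range_succ_iff.mp hi)

theorem degree_lt_of_idPoly_eq_one_sub_X_mul {n : ℕ} {q : ℝ[X]} (h : idPoly n = (1 - X) * q) :
    q.degree < n := by
  rcases eq_or_ne q 0 with rfl | hq
  · simp
  have hX : (1 - X : ℝ[X]).degree = 1 := by rw [← neg_sub, degree_neg, ← C_1, degree_X_sub_C]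
  have hle := degree_idPoly_le n
  rw [h, degree_mul, hX, degree_eq_natDegree hq] at hle
  have hle' : 1 + q.natDegree ≤ n := by exact_mod_cast hle
  rw [degree_eq_natDegree hq]
  exact_mod_cast (by omega : q.natDegree < n)

theorem integral_idPoly_succ_mul_eq_zero {n : ℕ} {p : ℝ[X]} (hp : p.degree < n) :
    ∫ x in (0 : ℝ)..1, (idPoly (n + 1)).eval x * p.eval x = 0 := by
  have h := congrArg (fun q : ℝ[X] ↦ ∫ x in (0 : ℝ)..1, q.eval x * p.eval x)
    (two_mul_idPoly_succ n)
  simp only [eval_mul, eval_add, eval_ofNat, add_mul, mul_assoc] at h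
  rw [intervalIntegral.integral_const_mul,
    intervalIntegral.integral_add (Continuous.intervalIntegrable (by fun_prop) 0 1)
      (Continuous.intervalIntegrable (by fun_prop) 0 1),
    integral_shiftedLegendre_mul_eq_zero (hp.trans (by exact_mod_cast n.lt_succ_self)),
    integral_shiftedLegendre_mul_eq_zero hp] at h
  simpa using h

theorem factorPoly_orthogonal_general (n m : ℕ) (hnm : n ≠ m)
    (qn qm : Polynomial ℝ)
    (hqn : idPoly n = (1 - Polynomial.X) * qn)
    (hqm : idPoly m = (1 - Polynomial.X) * qm) :
    ∫ t in (0:ℝ)..1, qn.eval t * qm.eval t * (1 - t) = 0 := by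
  wlog hmn : m < n generalizing n m qn qm
  · simp_rw [mul_comm (qn.eval _) (qm.eval _)]
    exact this m n hnm.symm qm qn hqm hqn (by omega)
  obtain ⟨k, rfl⟩ : ∃ k, n = k + 1 := ⟨n - 1, by omega⟩
  have hdeg : qm.degree < k :=
    (degree_lt_of_idPoly_eq_one_sub_X_mul hqm).trans_le (by exact_mod_cast Nat.lt_succ_iff.mp hmn)
  calc ∫ t in (0:ℝ)..1, qn.eval t * qm.eval t * (1 - t)
      = ∫ t in (0:ℝ)..1, (idPoly (k + 1)).eval t * qm.eval t :=
        intervalIntegral.integral_congr fun t _ ↦ by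
          simp only [hqn, eval_mul, eval_sub, eval_one, eval_X]; ring
    _ = 0 := integral_idPoly_succ_mul_eq_zero hdeg

theorem factorPoly_orthogonal (n m : ℕ) (hn : 0 < n) (hm : 0 < m) (hnm : n ≠ m)
    (qn qm : Polynomial ℝ)
    (hqn : idPoly n = (1 - Polynomial.X) * qn)
    (hqm : idPoly m = (1 - Polynomial.X) * qm) :
    ∫ t in (0:ℝ)..1, qn.eval t * qm.eval t * (1 - t) = 0 :=
  factorPoly_orthogonal_general n m hnm qn qm hqn hqm
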